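/- For every n ≥ 1, {y ∈ (x*,1] : τ(y) > n} = (x*, y_n], where y_n ∈ (x*,1] is determined by g(y_n) = 1 + x_n and (x_n) is the sequence with x_1 = x* and g(x_{k+1}) = x_k. Consequently μ{y ∈ Y : τ(y) > n} = ∫_{x*}^{y_n} h(x) dx. -/

import Mathlib

open Real Set MeasureTheory intervalIntegral

noncomputable section

/-- The common branch formula of the Thaler map:
`g(x) = (x^(1-γ) + (1+x)^(1-γ) − 1)^(1/(1-γ))` (real powers). -/
def thalerG (γ x : ℝ) : ℝ := (x ^ (1 - γ) + (1 + x) ^ (1 - γ) - 1) ^ (1 / (1 - γ))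

/-- The Thaler map with branch point `xs`: `T 0 = 0`, `T x = g x` on `(0, xs]` and
`T x = g x − 1` on `(xs, 1]`. -/
def thalerT (γ xs : ℝ) (x : ℝ) : ℝ :=
  if x ≤ 0 then 0 else if x ≤ xs then thalerG γ x else thalerG γ x - 1

/-- The invariant density `h(x) = x^(-γ) + (x+1)^(-γ)`. -/
def thalerH (γ x : ℝ) : ℝ := x ^ (-γ) + (x + 1) ^ (-γ)

/-- The measure `μ` on `[0,1]` with density `h` with respect to Lebesgue measure. -/
def thalerMu (γ : ℝ) : Measure ℝ :=
  (volume.restrict (Set.Icc (0 : ℝ) 1)).withDensity fun x => ENNReal.ofReal (thalerH γ x)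

/-- The first return time `τ(y) = inf{n ≥ 1 : T^n y ∈ Y}` to `Y = (xs, 1]`. -/
def thalerTau (γ xs : ℝ) (y : ℝ) : ℕ :=
  sInf {n : ℕ | 1 ≤ n ∧ (thalerT γ xs)^[n] y ∈ Set.Ioc xs 1}

lemma thaler_base_pos {γ x : ℝ} (hc : 0 < 1 - γ ∨ 1 - γ < 0) (hx : 0 < x) (hx1 : x ≤ 1) :
    0 < x ^ (1 - γ) + (1 + x) ^ (1 - γ) - 1 := by
  rcases hc with hc | hc
  · have h1 : 0 < x ^ (1 - γ) := Real.rpow_pos_of_pos hx _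
    have h2 : 1 < (1 + x) ^ (1 - γ) :=
      (Real.one_lt_rpow_iff_of_pos (by linarith)).mpr (Or.inl ⟨by linarith, hc⟩)
    linarith
  · have h1 : 1 ≤ x ^ (1 - γ) := Real.one_le_rpow_of_pos_of_le_one_of_nonpos hx hx1 hc.le
    have h2 : 0 < (1 + x) ^ (1 - γ) := Real.rpow_pos_of_pos (by linarith) _
    linarith

lemma thalerG_pos {γ x : ℝ} (hc : 0 < 1 - γ ∨ 1 - γ < 0) (hx : 0 < x) (hx1 : x ≤ 1) :
    0 < thalerG γ x :=
  Real.rpow_pos_of_pos (thaler_base_pos hc hx hx1) _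

lemma thaler_rpow_cancel {x c : ℝ} (hx : 0 ≤ x) (hcne : c ≠ 0) : (x ^ c) ^ (1 / c) = x := by
  rw [← Real.rpow_mul hx, mul_one_div, div_self hcne, Real.rpow_one]

lemma thalerG_strictMonoOn {γ : ℝ} (hc : 0 < 1 - γ ∨ 1 - γ < 0) :
    StrictMonoOn (thalerG γ) (Set.Ioc (0 : ℝ) 1) := by
  intro a ha b hb hab
  unfold thalerG
  rcases hc with hc | hc
  · have h1 : a ^ (1 - γ) < b ^ (1 - γ) := Real.rpow_lt_rpow ha.1.le hab hc
    have h2 : (1 + a) ^ (1 - γ) < (1 + b) ^ (1 - γ) :=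
      Real.rpow_lt_rpow (by linarith [ha.1]) (by linarith) hc
    exact Real.rpow_lt_rpow (thaler_base_pos (Or.inl hc) ha.1 ha.2).le (by linarith)
      (one_div_pos.mpr hc)
  · have h1 : b ^ (1 - γ) < a ^ (1 - γ) := Real.rpow_lt_rpow_of_neg ha.1 hab hc
    have h2 : (1 + b) ^ (1 - γ) < (1 + a) ^ (1 - γ) :=
      Real.rpow_lt_rpow_of_neg (by linarith [ha.1]) (by linarith) hc
    exact Real.rpow_lt_rpow_of_neg (thaler_base_pos (Or.inr hc) hb.1 hb.2) (by linarith)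
      (one_div_neg.mpr hc)

lemma thalerG_self_lt {γ x : ℝ} (hc : 0 < 1 - γ ∨ 1 - γ < 0) (hx : 0 < x) (hx1 : x ≤ 1) :
    x < thalerG γ x := by
  have hcne : (1 : ℝ) - γ ≠ 0 := by rcases hc with h | h <;> linarith
  have hxc : (x ^ (1 - γ)) ^ (1 / (1 - γ)) = x := thaler_rpow_cancel hx.le hcne
  unfold thalerG
  rcases hc with hc | hc
  · have h2 : 1 < (1 + x) ^ (1 - γ) :=
      (Real.one_lt_rpow_iff_of_pos (by linarith)).mpr (Or.inl ⟨by linarith, hc⟩)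
    calc x = (x ^ (1 - γ)) ^ (1 / (1 - γ)) := hxc.symm
      _ < _ := Real.rpow_lt_rpow (Real.rpow_pos_of_pos hx _).le (by linarith)
          (one_div_pos.mpr hc)
  · have h2 : (1 + x) ^ (1 - γ) < 1 := Real.rpow_lt_one_of_one_lt_of_neg (by linarith) hc
    calc x = (x ^ (1 - γ)) ^ (1 / (1 - γ)) := hxc.symm
      _ < _ := Real.rpow_lt_rpow_of_neg (thaler_base_pos (Or.inr hc) hx hx1) (by linarith)
          (one_div_neg.mpr hc)

lemma thalerG_continuousAt {γ x : ℝ} (hc : 0 < 1 - γ ∨ 1 - γ < 0) (hx : 0 < x) (hx1 : x ≤ 1) :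
    ContinuousAt (thalerG γ) x := by
  have h1 : ContinuousAt (fun t : ℝ => t ^ (1 - γ) + (1 + t) ^ (1 - γ) - 1) x := by
    have a1 : ContinuousAt (fun t : ℝ => t ^ (1 - γ)) x :=
      Real.continuousAt_rpow_const x _ (Or.inl hx.ne')
    have a2 : ContinuousAt (fun t : ℝ => (1 + t) ^ (1 - γ)) x :=
      (continuousAt_const.add continuousAt_id).rpow_const
        (Or.inl (by simp only [Pi.add_apply, id_eq]; intro h; linarith))
    exact (a1.add a2).sub continuousAt_const
  exact h1.rpow_const (Or.inl (thaler_base_pos hc hx hx1).ne')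

/-- For every `n ≥ 1`, `{y ∈ (x*,1] : τ(y) > n} = (x*, y_n]`, where
`y_n ∈ (x*,1]` is determined by `g(y_n) = 1 + x_n` and `(x_n)` is the sequence with
`x_1 = x*` and `g(x_{k+1}) = x_k`.  Consequently
`μ{y ∈ Y : τ(y) > n} = ∫_{x*}^{y_n} h(x) dx`. -/
theorem thaler_tail_set_eq (γ : ℝ)
    (hγ : γ ∈ Set.Ioo (0 : ℝ) 1 ∪ Set.Ioi (1 : ℝ))
    (xs : ℝ) (hxs : xs ∈ Set.Ioo (0 : ℝ) 1)
    (hxseq : xs ^ (1 - γ) + (1 + xs) ^ (1 - γ) = 2)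
    (x : ℕ → ℝ)
    (hx1 : x 1 = xs)
    (hxmem : ∀ n ≥ 1, x n ∈ Set.Ioc (0 : ℝ) xs)
    (hxrec : ∀ n ≥ 1, thalerG γ (x (n + 1)) = x n)
    (y : ℕ → ℝ)
    (hymem : ∀ n ≥ 1, y n ∈ Set.Ioc xs 1)
    (hyrec : ∀ n ≥ 1, thalerG γ (y n) = 1 + x n) :
    ∀ n : ℕ, 1 ≤ n →
      {z | z ∈ Set.Ioc xs 1 ∧ n < thalerTau γ xs z} = Set.Ioc xs (y n) ∧
      thalerMu γ {z | z ∈ Set.Ioc xs 1 ∧ n < thalerTau γ xs z}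
        = ENNReal.ofReal (∫ x in xs..(y n), thalerH γ x) := by
  have hc : 0 < 1 - γ ∨ 1 - γ < 0 := by
    rcases hγ with h | h
    · exact Or.inl (by linarith [h.2])
    · exact Or.inr (by simp only [Set.mem_Ioi] at h; linarith)
  have hcne : (1 : ℝ) - γ ≠ 0 := by rcases hc with h | h <;> linarith
  obtain ⟨hxs0, hxs1⟩ := hxs
  have hmono := thalerG_strictMonoOn hc
  have hT_low : ∀ u : ℝ, 0 < u → u ≤ xs → thalerT γ xs u = thalerG γ u := by
    intro u h1 h2
    rw [thalerT, if_neg (not_le.mpr h1), if_pos h2]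
  have hT_Y : ∀ u : ℝ, xs < u → thalerT γ xs u = thalerG γ u - 1 := by
    intro u h
    rw [thalerT, if_neg (by linarith : ¬ u ≤ 0), if_neg (not_le.mpr h)]
  have hgxs : thalerG γ xs = 1 := by
    rw [thalerG, hxseq]; norm_num
  have hg1 : thalerG γ 1 = 2 := by
    have hb : (1 : ℝ) ^ (1 - γ) + (1 + 1 : ℝ) ^ (1 - γ) - 1 = 2 ^ (1 - γ) := by
      rw [Real.one_rpow]; norm_num
    rw [thalerG, hb, ← Real.rpow_mul (by norm_num), mul_one_div, div_self hcne, Real.rpow_one]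
  -- escape lemma
  have hescape : ∀ t : ℝ, 0 < t → t ≤ xs → ∃ k, (thalerT γ xs)^[k] t ∈ Set.Ioc xs 1 := by
    intro t ht0 htxs
    by_contra hcon
    push_neg at hcon
    have hstay : ∀ k, (thalerT γ xs)^[k] t ∈ Set.Ioc 0 xs := by
      intro k
      induction k with
      | zero => exact ⟨ht0, htxs⟩
      | succ k ih =>
        have hle1 : (thalerT γ xs)^[k] t ≤ 1 := le_trans ih.2 hxs1.le
        have hpos := thalerG_pos hc ih.1 hle1
        have hle : thalerG γ ((thalerT γ xs)^[k] t) ≤ 1 := by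
          calc thalerG γ ((thalerT γ xs)^[k] t) ≤ thalerG γ xs :=
                hmono.monotoneOn ⟨ih.1, hle1⟩ ⟨hxs0, hxs1.le⟩ ih.2
            _ = 1 := hgxs
        rw [Function.iterate_succ_apply', hT_low _ ih.1 ih.2]
        refine ⟨hpos, ?_⟩
        by_contra hgt
        push_neg at hgt
        exact hcon (k + 1)
          (by rw [Function.iterate_succ_apply', hT_low _ ih.1 ih.2]; exact ⟨hgt, hle⟩)
    have hsm : StrictMono (fun k => (thalerT γ xs)^[k] t) := by
      apply strictMono_nat_of_lt_succ
      intro k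
      show (thalerT γ xs)^[k] t < (thalerT γ xs)^[k + 1] t
      rw [Function.iterate_succ_apply', hT_low _ (hstay k).1 (hstay k).2]
      exact thalerG_self_lt hc (hstay k).1 (le_trans (hstay k).2 hxs1.le)
    have hbdd : BddAbove (Set.range fun k => (thalerT γ xs)^[k] t) :=
      ⟨xs, by rintro _ ⟨k, rfl⟩; exact (hstay k).2⟩
    set L := ⨆ k, (thalerT γ xs)^[k] t with hLdef
    have htend : Filter.Tendsto (fun k => (thalerT γ xs)^[k] t) Filter.atTop (nhds L) :=
      tendsto_atTop_ciSup hsm.monotone hbdd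
    have hLxs : L ≤ xs := ciSup_le fun k => (hstay k).2
    have hL0 : 0 < L := lt_of_lt_of_le ht0 (le_ciSup hbdd 0)
    have hgL := thalerG_self_lt hc hL0 (le_trans hLxs hxs1.le)
    have hc1 : ContinuousAt (thalerG γ) L :=
      thalerG_continuousAt hc hL0 (le_trans hLxs hxs1.le)
    have htend2 : Filter.Tendsto (fun k => (thalerT γ xs)^[k + 1] t) Filter.atTop
        (nhds (thalerG γ L)) := by
      have heq : (fun k => (thalerT γ xs)^[k + 1] t)
          = (thalerG γ) ∘ (fun k => (thalerT γ xs)^[k] t) := by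
        funext k
        rw [Function.comp_apply, Function.iterate_succ_apply',
          hT_low _ (hstay k).1 (hstay k).2]
      rw [heq]
      exact hc1.tendsto.comp htend
    have htend3 : Filter.Tendsto (fun k => (thalerT γ xs)^[k + 1] t) Filter.atTop (nhds L) :=
      (Filter.tendsto_add_atTop_iff_nat 1).mpr htend
    exact absurd (tendsto_nhds_unique htend2 htend3) (ne_of_gt hgL)
  -- backward lemma
  have hL : ∀ m, 1 ≤ m → ∀ w ∈ Set.Ioc (x m) 1,
      ∃ k ≤ m - 1, (thalerT γ xs)^[k] w ∈ Set.Ioc xs 1 := by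
    intro m hm1
    induction m, hm1 using Nat.le_induction with
    | base =>
      intro w hw
      rw [hx1] at hw
      exact ⟨0, le_refl 0, by simpa using hw⟩
    | succ m hm ih =>
      intro w hw
      by_cases hwxs : xs < w
      · exact ⟨0, by omega, by simpa using ⟨hwxs, hw.2⟩⟩
      · push_neg at hwxs
        have hx0 : 0 < x (m + 1) := (hxmem (m + 1) (by omega)).1
        have hxle : x (m + 1) ≤ xs := (hxmem (m + 1) (by omega)).2
        have hw0 : 0 < w := lt_trans hx0 hw.1
        have hTw : thalerT γ xs w = thalerG γ w := hT_low w hw0 hwxs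
        have hgw_mem : thalerG γ w ∈ Set.Ioc (x m) 1 := by
          constructor
          · rw [← hxrec m hm]
            exact hmono ⟨hx0, le_trans hxle hxs1.le⟩ ⟨hw0, le_trans hwxs hxs1.le⟩ hw.1
          · calc thalerG γ w ≤ thalerG γ xs :=
                  hmono.monotoneOn ⟨hw0, le_trans hwxs hxs1.le⟩ ⟨hxs0, hxs1.le⟩ hwxs
              _ = 1 := hgxs
        obtain ⟨k, hk, hmem⟩ := ih (thalerG γ w) hgw_mem
        refine ⟨k + 1, by omega, ?_⟩
        rw [Function.iterate_succ_apply, hTw]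
        exact hmem
  intro n hn
  have hyn := hymem n hn
  -- forward lemma
  have hF : ∀ k, 1 ≤ k → k ≤ n → ∀ z ∈ Set.Ioc xs (y n),
      (thalerT γ xs)^[k] z ∈ Set.Ioc 0 (x (n + 1 - k)) := by
    intro k hk1
    induction k, hk1 using Nat.le_induction with
    | base =>
      intro _ z hz
      have hz0 : 0 < z := lt_trans hxs0 hz.1
      have hz1 : z ≤ 1 := le_trans hz.2 hyn.2
      rw [show n + 1 - 1 = n by omega, Function.iterate_one, hT_Y z hz.1]
      constructor
      · have h1 : thalerG γ xs < thalerG γ z :=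
          hmono ⟨hxs0, hxs1.le⟩ ⟨hz0, hz1⟩ hz.1
        rw [hgxs] at h1; linarith
      · have h2 : thalerG γ z ≤ thalerG γ (y n) :=
          hmono.monotoneOn ⟨hz0, hz1⟩ ⟨lt_trans hxs0 hyn.1, hyn.2⟩ hz.2
        rw [hyrec n hn] at h2; linarith
    | succ k hk ih =>
      intro hkn z hz
      have hprev := ih (by omega) z hz
      set j := n - k with hj
      have e1 : n + 1 - k = j + 1 := by omega
      have e2 : n + 1 - (k + 1) = j := by omega
      have hj1 : 1 ≤ j := by omega
      rw [e1] at hprev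
      rw [e2]
      have hxj0 : 0 < x (j + 1) := (hxmem (j + 1) (by omega)).1
      have hxjle : x (j + 1) ≤ xs := (hxmem (j + 1) (by omega)).2
      have hu0 : 0 < (thalerT γ xs)^[k] z := hprev.1
      have huxs : (thalerT γ xs)^[k] z ≤ xs := le_trans hprev.2 hxjle
      have hu1 : (thalerT γ xs)^[k] z ≤ 1 := le_trans huxs hxs1.le
      rw [Function.iterate_succ_apply', hT_low _ hu0 huxs]
      refine ⟨thalerG_pos hc hu0 hu1, ?_⟩
      calc thalerG γ ((thalerT γ xs)^[k] z)
          ≤ thalerG γ (x (j + 1)) :=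
            hmono.monotoneOn ⟨hu0, hu1⟩ ⟨hxj0, le_trans hxjle hxs1.le⟩ hprev.2
        _ = x j := hxrec j hj1
  have hset : {z | z ∈ Set.Ioc xs 1 ∧ n < thalerTau γ xs z} = Set.Ioc xs (y n) := by
    ext z
    simp only [Set.mem_setOf_eq, Set.mem_Ioc]
    constructor
    · rintro ⟨⟨hz1, hz2⟩, hτ⟩
      refine ⟨hz1, ?_⟩
      by_contra hzy
      push_neg at hzy
      have hz0 : 0 < z := lt_trans hxs0 hz1
      have hTz : thalerT γ xs z = thalerG γ z - 1 := hT_Y z hz1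
      have h1 : x n < thalerG γ z - 1 := by
        have hlt := hmono ⟨lt_trans hxs0 hyn.1, hyn.2⟩ ⟨hz0, hz2⟩ hzy
        rw [hyrec n hn] at hlt; linarith
      have h2 : thalerG γ z - 1 ≤ 1 := by
        have hle : thalerG γ z ≤ thalerG γ 1 :=
          hmono.monotoneOn ⟨hz0, hz2⟩ ⟨one_pos, le_refl 1⟩ hz2
        rw [hg1] at hle; linarith
      obtain ⟨k, hk, hmem⟩ := hL n hn (thalerT γ xs z) (by rw [hTz]; exact ⟨h1, h2⟩)
      have hmem' : (thalerT γ xs)^[k + 1] z ∈ Set.Ioc xs 1 := by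
        rw [Function.iterate_succ_apply]; exact hmem
      have hτle : thalerTau γ xs z ≤ k + 1 := Nat.sInf_le ⟨by omega, hmem'⟩
      omega
    · rintro ⟨hz1, hz2⟩
      have hz2' : z ≤ 1 := le_trans hz2 hyn.2
      refine ⟨⟨hz1, hz2'⟩, ?_⟩
      have hzn : (thalerT γ xs)^[n] z ∈ Set.Ioc 0 xs := by
        have hh := hF n hn (le_refl n) z ⟨hz1, hz2⟩
        rwa [show n + 1 - n = 1 by omega, hx1] at hh
      obtain ⟨k, hk⟩ := hescape _ hzn.1 hzn.2
      have hk1 : 1 ≤ k := by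
        rcases Nat.eq_zero_or_pos k with rfl | h
        · simp only [Function.iterate_zero, id_eq] at hk
          exact absurd hk.1 (not_lt.mpr hzn.2)
        · exact h
      have hmemS : k + n ∈ {m : ℕ | 1 ≤ m ∧ (thalerT γ xs)^[m] z ∈ Set.Ioc xs 1} := by
        refine ⟨by omega, ?_⟩
        rw [Function.iterate_add_apply]
        exact hk
      have hlow : ∀ m ∈ {m : ℕ | 1 ≤ m ∧ (thalerT γ xs)^[m] z ∈ Set.Ioc xs 1}, n < m := by
        rintro m ⟨hm1, hmY⟩
        by_contra hmn
        push_neg at hmn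
        have hmm := hF m hm1 hmn z ⟨hz1, hz2⟩
        have hlem : (thalerT γ xs)^[m] z ≤ xs :=
          le_trans hmm.2 (hxmem _ (by omega)).2
        exact absurd hmY.1 (not_lt.mpr hlem)
      exact hlow _ (Nat.sInf_mem ⟨k + n, hmemS⟩)
  refine ⟨hset, ?_⟩
  rw [hset]
  have hxsyn : xs ≤ y n := hyn.1.le
  have hsub : Set.Ioc xs (y n) ⊆ Set.Icc (0 : ℝ) 1 := fun t ht =>
    ⟨le_of_lt (lt_of_le_of_lt hxs0.le ht.1), le_trans ht.2 hyn.2⟩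
  have hcont : ContinuousOn (thalerH γ) (Set.Icc xs (y n)) := by
    intro t ht
    have ht0 : 0 < t := lt_of_lt_of_le hxs0 ht.1
    apply ContinuousAt.continuousWithinAt
    have a1 : ContinuousAt (fun t : ℝ => t ^ (-γ)) t :=
      Real.continuousAt_rpow_const t _ (Or.inl ht0.ne')
    have a2 : ContinuousAt (fun t : ℝ => (t + 1) ^ (-γ)) t :=
      (continuousAt_id.add continuousAt_const).rpow_const
        (Or.inl (by simp only [Pi.add_apply, id_eq]; intro h; linarith))
    exact a1.add a2
  have hint : MeasureTheory.IntegrableOn (thalerH γ) (Set.Ioc xs (y n)) volume :=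
    (hcont.integrableOn_Icc).mono_set Set.Ioc_subset_Icc_self
  have hnn : 0 ≤ᵐ[volume.restrict (Set.Ioc xs (y n))] thalerH γ := by
    rw [Filter.EventuallyLE, ae_restrict_iff' measurableSet_Ioc]
    refine Filter.Eventually.of_forall fun t ht => ?_
    have ht0 : (0 : ℝ) ≤ t := le_of_lt (lt_of_le_of_lt hxs0.le ht.1)
    exact add_nonneg (Real.rpow_nonneg ht0 _) (Real.rpow_nonneg (by linarith) _)
  rw [thalerMu, withDensity_apply _ measurableSet_Ioc,
    Measure.restrict_restrict measurableSet_Ioc, Set.inter_eq_self_of_subset_left hsub,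
    intervalIntegral.integral_of_le hxsyn,
    MeasureTheory.ofReal_integral_eq_lintegral_ofReal hint hnn]

end
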